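/- arXiv:1507.05343 — 2 statements merged into one kernel-verified Lean document; each statement's English description precedes it below -/
import Mathlib

section
/- Suppose a multi-labeling of an l-graph has excess Δ := (l + Σ_s d_s)/2 + 1 − m, where d_s is the number of n-labels on the s-th n-vertex and m is the number of distinct labels. For each pair (i, j), let b_{ij} be the number of edges whose p-endpoint is labeled i and whose n-endpoint tuple contains j. Then Σ_{(i,j): b_{ij} > 2} b_{ij} ≤ 12Δ. -/
open Finset

/-- Number of edges of the `l`-graph cycle whose `p`-vertex endpoint has label `i`
and whose `n`-vertex endpoint contains `j` in its label tuple. The `s`-th `n`-vertex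
sits between the `s`-th and `(s+1)`-th `p`-vertices. -/
def edgeCount {l : ℕ} [NeZero l] (pl : Fin l → ℕ) (nl : Fin l → Finset ℕ) (i j : ℕ) : ℕ :=
  ∑ s : Fin l, ((if pl s = i ∧ j ∈ nl s then 1 else 0) +
    (if pl (s + 1) = i ∧ j ∈ nl s then 1 else 0))

/-- A multi-labeling of the `l`-graph (a cycle alternating between `l` `p`-vertices and
`l` `n`-vertices): each `p`-vertex gets a label, each `n`-vertex gets a set of between
1 and `D` distinct labels; consecutive `p`-vertices have distinct labels, and every
edge count `b_{ij}` is even. -/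
def IsMultiLabeling (l D : ℕ) [NeZero l] (pl : Fin l → ℕ) (nl : Fin l → Finset ℕ) : Prop :=
  (∀ s : Fin l, pl s ≠ pl (s + 1)) ∧
  (∀ s : Fin l, 1 ≤ (nl s).card ∧ (nl s).card ≤ D) ∧
  (∀ i j : ℕ, Even (edgeCount pl nl i j))

/-- `N_j`: the number of `n`-vertices whose label tuple contains `j`. -/
def nLabelCount {l : ℕ} (nl : Fin l → Finset ℕ) (j : ℕ) : ℕ :=
  (Finset.univ.filter fun s => j ∈ nl s).card

/-- `m`: the total number of distinct `p`-labels plus distinct `n`-labels. -/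
def distinctLabels {l : ℕ} (pl : Fin l → ℕ) (nl : Fin l → Finset ℕ) : ℕ :=
  (Finset.univ.image pl).card + (Finset.univ.biUnion nl).card

/-- The excess `Δ = (l + Σ_s d_s)/2 + 1 − m` of a multi-labeling. -/
noncomputable def excess {l : ℕ} (pl : Fin l → ℕ) (nl : Fin l → Finset ℕ) : ℝ :=
  ((l : ℝ) + ∑ s : Fin l, ((nl s).card : ℝ)) / 2 + 1 - distinctLabels pl nl

/-!
Regard the `n`-vertex `s` as an edge joining the labels of its two `p`-neighbours, and let
`r` be the rank over `𝔽₂` of these `l` edges. The cycle is connected, so `#P ≤ r + 1` for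
the set `P` of `p`-labels. For an `n`-label `j`, let `N_j` be the number of `n`-vertices
carrying it and `V_j` the set of `p`-labels adjacent to it. The edges carrying `j` sum to zero
(all `b_{ij}` are even) and only touch `V_j`, so adding them to those of earlier labels raises
the rank by at most `#new edges - 1` and by at most `#V_j - 1`; as `#V_j ≥ 2`, summing over
`j` gives `2r + 2#N ≤ l + Σ_j #V_j`. Finally evenness gives `[b > 2] b + 6 [b > 0] ≤ 3b`,
whence `Σ_{b_{ij} > 2} b_{ij} ≤ 6 Σ_j (N_j - #V_j)`, and the three estimates add up to `12Δ`.
-/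

open Submodule Module

section SpanRank

variable {K M ι κ : Type*} [Field K] [AddCommGroup M] [Module K M] [DecidableEq M] (v : ι → M)

lemma finrank_span_image_le_card (A : Finset ι) : finrank K (span K (A.image v : Set M)) ≤ #A :=
  (finrank_span_finset_le_card _).trans card_image_le

lemma finrank_span_image_union_le [DecidableEq ι] (A B : Finset ι) :
    finrank K (span K ((A ∪ B).image v : Set M)) ≤
      finrank K (span K (A.image v : Set M)) + finrank K (span K (B.image v : Set M)) := by
  rw [image_union, coe_union, span_union]
  exact finrank_add_le_finrank_add_finrank _ _

lemma mem_span_image_erase_of_sum_eq_zero [DecidableEq ι] {S : Finset ι}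
    (hS : ∑ s ∈ S, v s = 0) {s₀ : ι} (hs₀ : s₀ ∈ S) :
    v s₀ ∈ span K ((S.erase s₀).image v : Set M) := by
  rw [← add_sum_erase S v hs₀, add_eq_zero_iff_eq_neg] at hS
  rw [hS]
  exact neg_mem (sum_mem fun t ht ↦ subset_span (mem_image_of_mem v ht))

lemma finrank_span_image_union_lt [DecidableEq ι] {A S : Finset ι} (hS : ∑ s ∈ S, v s = 0)
    (hnew : (S \ A).Nonempty) :
    finrank K (span K ((A ∪ S).image v : Set M)) <
      finrank K (span K (A.image v : Set M)) + #(S \ A) := by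
  obtain ⟨s₀, hs₀⟩ := hnew
  obtain ⟨hs₀S, hs₀A⟩ := mem_sdiff.1 hs₀
  have hdep : v s₀ ∈ span K (((A ∪ S).erase s₀).image v : Set M) :=
    span_mono (by gcongr; exact subset_union_right)
      (mem_span_image_erase_of_sum_eq_zero v hS hs₀S)
  have hspan :
      span K ((A ∪ S).image v : Set M) = span K (((A ∪ S).erase s₀).image v : Set M) := by
    rw [← span_insert_eq_span hdep, ← coe_insert, ← image_insert,
      insert_erase (mem_union_right A hs₀S)]
  have herase : (A ∪ S).erase s₀ = A ∪ (S \ A).erase s₀ := by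
    ext t
    simp only [mem_erase, mem_union, mem_sdiff]
    grind
  have h := finrank_span_image_union_le v A ((S \ A).erase s₀) (K := K)
  have := finrank_span_image_le_card v ((S \ A).erase s₀) (K := K)
  rw [card_erase_of_mem hs₀] at this
  have := card_pos.2 ⟨s₀, hs₀⟩
  rw [hspan, herase]
  omega

lemma two_mul_finrank_span_image_union_add_two_le [DecidableEq ι] (A : Finset ι) {S : Finset ι}
    (hS : ∑ s ∈ S, v s = 0) {k : ℕ} (hk : finrank K (span K (S.image v : Set M)) < k)
    (hk₂ : 2 ≤ k) :
    2 * finrank K (span K ((A ∪ S).image v : Set M)) + 2 ≤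
      2 * finrank K (span K (A.image v : Set M)) + #(S \ A) + k := by
  rcases (S \ A).eq_empty_or_nonempty with hold | hnew
  · rw [union_eq_left.2 (sdiff_eq_empty_iff_subset.1 hold)]
    omega
  · have := finrank_span_image_union_lt v hS hnew (K := K)
    have := finrank_span_image_union_le v A S (K := K)
    omega

theorem two_mul_finrank_span_image_biUnion_add_le [DecidableEq ι] [DecidableEq κ]
    (S : κ → Finset ι) (k : κ → ℕ) (J : Finset κ) (hS : ∀ j ∈ J, ∑ s ∈ S j, v s = 0)
    (hk : ∀ j ∈ J, finrank K (span K ((S j).image v : Set M)) < k j)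
    (hk₂ : ∀ j ∈ J, 2 ≤ k j) :
    2 * finrank K (span K ((J.biUnion S).image v : Set M)) + 2 * #J ≤
      #(J.biUnion S) + ∑ j ∈ J, k j := by
  induction J using Finset.induction_on with
  | empty => rw [biUnion_empty, image_empty, coe_empty, span_empty, finrank_bot]; simp
  | @insert j J hj ih =>
    have hj' := mem_insert_self j J
    have hstep := two_mul_finrank_span_image_union_add_two_le v (J.biUnion S) (hS j hj')
      (hk j hj') (hk₂ j hj')
    have ih := ih (fun i hi ↦ hS i (mem_insert_of_mem hi))
      (fun i hi ↦ hk i (mem_insert_of_mem hi)) (fun i hi ↦ hk₂ i (mem_insert_of_mem hi))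
    have hcard := card_sdiff_add_card (S j) (J.biUnion S)
    rw [biUnion_insert, card_insert_of_notMem hj, sum_insert hj, union_comm]
    rw [union_comm] at hcard
    omega

end SpanRank

section EdgeVectors

variable {α ι : Type*}

noncomputable def edgeVec (a b : α) : α →₀ ZMod 2 :=
  Finsupp.single a 1 + Finsupp.single b 1

lemma edgeVec_comm (a b : α) : edgeVec a b = edgeVec b a :=
  add_comm _ _

lemma edgeVec_add_edgeVec [DecidableEq α] (a b c : α) :
    edgeVec a b + edgeVec b c = edgeVec a c := by
  ext x
  simp only [edgeVec, Finsupp.add_apply, Finsupp.single_apply]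
  split_ifs <;> decide

lemma edgeVec_self [DecidableEq α] (a : α) : edgeVec a a = 0 := by
  simpa using edgeVec_add_edgeVec a a a

lemma finrank_span_edgeVec_lt [DecidableEq α] (f g : ι → α) (T : Finset ι) {V : Finset α}
    (hV : V.Nonempty) (hT : ∀ t ∈ T, f t ∈ V ∧ g t ∈ V) :
    finrank (ZMod 2)
      (span (ZMod 2) (T.image (fun t ↦ edgeVec (f t) (g t)) : Set (α →₀ ZMod 2))) < #V := by
  obtain ⟨c, hc⟩ := hV
  set W := span (ZMod 2) ((V.erase c).image (edgeVec c) : Set (α →₀ ZMod 2))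
  have hW : ∀ a ∈ V, edgeVec c a ∈ W := by
    intro a ha
    rcases eq_or_ne a c with rfl | hac
    · rw [edgeVec_self]
      exact zero_mem W
    · exact subset_span (mem_image_of_mem _ (mem_erase.2 ⟨hac, ha⟩))
  have hle :
      span (ZMod 2) (T.image (fun t ↦ edgeVec (f t) (g t)) : Set (α →₀ ZMod 2)) ≤ W := by
    rw [span_le, coe_image]
    rintro _ ⟨t, ht, rfl⟩
    dsimp only
    rw [← edgeVec_add_edgeVec (f t) c (g t), edgeVec_comm (f t) c]
    exact add_mem (hW _ (hT t ht).1) (hW _ (hT t ht).2)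
  calc _ ≤ finrank (ZMod 2) W := finrank_mono hle
    _ ≤ #(V.erase c) := finrank_span_image_le_card _ _
    _ < #V := card_erase_lt_of_mem hc

lemma edgeVec_mem_span_walk [DecidableEq α] (q : ℕ → α) (k : ℕ) :
    edgeVec (q 0) (q k) ∈ span (ZMod 2) (Set.range fun i ↦ edgeVec (q i) (q (i + 1))) := by
  induction k with
  | zero => rw [edgeVec_self]; exact zero_mem _
  | succ k ih =>
    rw [← edgeVec_add_edgeVec _ (q k)]
    exact add_mem ih (subset_span ⟨k, rfl⟩)

lemma card_le_finrank_add_one [DecidableEq α] {P : Finset α} {c : α}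
    (W : Submodule (ZMod 2) (α →₀ ZMod 2)) [FiniteDimensional (ZMod 2) W]
    (hW : ∀ a ∈ P, edgeVec c a ∈ W) : #P ≤ finrank (ZMod 2) W + 1 := by
  set e : P → α →₀ ZMod 2 := fun a ↦ Finsupp.single (a : α) 1
  have hind : LinearIndependent (ZMod 2) e :=
    (Finsupp.linearIndependent_single_one (ZMod 2) α).comp _ Subtype.val_injective
  have hle : span (ZMod 2) (Set.range e) ≤ (ZMod 2 ∙ Finsupp.single c 1) ⊔ W := by
    rw [span_le]
    rintro _ ⟨a, rfl⟩
    have : e a = Finsupp.single c 1 + edgeVec c a := by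
      ext x
      simp only [e, edgeVec, Finsupp.add_apply, Finsupp.single_apply]
      split_ifs <;> decide
    rw [SetLike.mem_coe, this]
    exact add_mem (mem_sup_left (mem_span_singleton_self _)) (mem_sup_right (hW a a.2))
  calc #P = finrank (ZMod 2) (span (ZMod 2) (Set.range e)) := by
        rw [finrank_span_eq_card hind, Fintype.card_coe]
    _ ≤ finrank (ZMod 2) ↥((ZMod 2 ∙ Finsupp.single c 1) ⊔ W) := finrank_mono hle
    _ ≤ finrank (ZMod 2) (ZMod 2 ∙ Finsupp.single c (1 : ZMod 2)) + finrank (ZMod 2) W :=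
        finrank_add_le_finrank_add_finrank _ _
    _ = finrank (ZMod 2) W + 1 := by
        rw [finrank_span_singleton (Finsupp.single_ne_zero.2 one_ne_zero), add_comm]

end EdgeVectors

section MultiLabeling

variable {l : ℕ} [NeZero l] (pl : Fin l → ℕ) (nl : Fin l → Finset ℕ)

def nVerticesWith (j : ℕ) : Finset (Fin l) := univ.filter (j ∈ nl ·)

def adjPLabels (j : ℕ) : Finset ℕ := (univ.image pl).filter (0 < edgeCount pl nl · j)

noncomputable def pEdge (s : Fin l) : ℕ →₀ ZMod 2 := edgeVec (pl s) (pl (s + 1))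

omit [NeZero l] in
lemma card_nVerticesWith (j : ℕ) : #(nVerticesWith nl j) = nLabelCount nl j := rfl

lemma edgeCount_eq_sum_nVerticesWith (i j : ℕ) :
    edgeCount pl nl i j = ∑ s ∈ nVerticesWith nl j,
      ((if pl s = i then 1 else 0) + (if pl (s + 1) = i then 1 else 0)) := by
  rw [nVerticesWith, sum_filter, edgeCount]
  refine sum_congr rfl fun s _ ↦ ?_
  split_ifs <;> simp_all

lemma sum_edgeCount (j : ℕ) :
    ∑ i ∈ univ.image pl, edgeCount pl nl i j = 2 * nLabelCount nl j := by
  simp_rw [edgeCount_eq_sum_nVerticesWith]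
  rw [sum_comm, ← card_nVerticesWith, card_eq_sum_ones, mul_sum, mul_one]
  refine sum_congr rfl fun s _ ↦ ?_
  rw [sum_add_distrib, sum_ite_eq, sum_ite_eq, if_pos (mem_image_of_mem pl (mem_univ _)),
    if_pos (mem_image_of_mem pl (mem_univ _))]

omit [NeZero l] in
lemma sum_nLabelCount : ∑ j ∈ univ.biUnion nl, nLabelCount nl j = ∑ s, #(nl s) := by
  simp_rw [nLabelCount, card_filter]
  rw [sum_comm]
  refine sum_congr rfl fun s _ ↦ ?_
  rw [sum_boole, Nat.cast_id, filter_mem_eq_inter,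
    inter_eq_right.2 (subset_biUnion_of_mem nl (mem_univ s))]

lemma mem_adjPLabels_of_mem {j : ℕ} {s : Fin l} (h : j ∈ nl s) :
    pl s ∈ adjPLabels pl nl j ∧ pl (s + 1) ∈ adjPLabels pl nl j := by
  have hpos : ∀ i, (pl s = i ∨ pl (s + 1) = i) → 0 < edgeCount pl nl i j := fun i hi ↦
    sum_pos' (fun _ _ ↦ Nat.zero_le _)
      ⟨s, mem_univ s, by rcases hi with hi | hi <;> simp [hi, h]⟩
  exact ⟨mem_filter.2 ⟨mem_image_of_mem pl (mem_univ _), hpos _ (Or.inl rfl)⟩,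
    mem_filter.2 ⟨mem_image_of_mem pl (mem_univ _), hpos _ (Or.inr rfl)⟩⟩

lemma two_le_card_adjPLabels (hne : ∀ s, pl s ≠ pl (s + 1)) {j : ℕ} {s : Fin l}
    (h : j ∈ nl s) :
    2 ≤ #(adjPLabels pl nl j) := by
  obtain ⟨h₁, h₂⟩ := mem_adjPLabels_of_mem pl nl h
  rw [← card_pair (hne s)]
  exact card_le_card (insert_subset h₁ (singleton_subset_iff.2 h₂))

lemma sum_pEdge_eq_zero {j : ℕ} (hE : ∀ i, Even (edgeCount pl nl i j)) :
    ∑ s ∈ nVerticesWith nl j, pEdge pl s = 0 := by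
  ext i
  have hcoord : ∀ s, pEdge pl s i =
      (((if pl s = i then 1 else 0) + (if pl (s + 1) = i then 1 else 0) : ℕ) : ZMod 2) := by
    intro s
    simp only [pEdge, edgeVec, Finsupp.add_apply, Finsupp.single_apply]
    split_ifs <;> simp; decide
  rw [Finsupp.finsetSum_apply, Finsupp.zero_apply]
  simp_rw [hcoord]
  rw [← Nat.cast_sum, ← edgeCount_eq_sum_nVerticesWith, ZMod.natCast_eq_zero_iff]
  exact (hE i).two_dvd

lemma finrank_span_pEdge_lt {j : ℕ} {s : Fin l} (h : j ∈ nl s) :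
    finrank (ZMod 2)
      (span (ZMod 2) ((nVerticesWith nl j).image (pEdge pl) : Set (ℕ →₀ ZMod 2))) <
        #(adjPLabels pl nl j) :=
  finrank_span_edgeVec_lt _ _ _ ⟨_, (mem_adjPLabels_of_mem pl nl h).1⟩
    fun _ ht ↦ mem_adjPLabels_of_mem pl nl (mem_filter.1 ht).2

lemma sum_large_edgeCount_add_le {j : ℕ} (hE : ∀ i, Even (edgeCount pl nl i j)) :
    ∑ i ∈ univ.image pl, (if 2 < edgeCount pl nl i j then edgeCount pl nl i j else 0) +
      6 * #(adjPLabels pl nl j) ≤ 6 * nLabelCount nl j := by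
  have hpoint : ∀ i, (if 2 < edgeCount pl nl i j then edgeCount pl nl i j else 0) +
      (if 0 < edgeCount pl nl i j then 6 else 0) ≤ 3 * edgeCount pl nl i j := by
    intro i
    obtain ⟨c, hc⟩ := hE i
    split_ifs <;> omega
  calc _ = ∑ i ∈ univ.image pl, ((if 2 < edgeCount pl nl i j then edgeCount pl nl i j else 0) +
        (if 0 < edgeCount pl nl i j then 6 else 0)) := by
        rw [sum_add_distrib, adjPLabels, card_filter, mul_sum]
        simp_rw [mul_ite, mul_one, mul_zero]
    _ ≤ ∑ i ∈ univ.image pl, 3 * edgeCount pl nl i j := sum_le_sum fun i _ ↦ hpoint i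
    _ = 6 * nLabelCount nl j := by rw [← mul_sum, sum_edgeCount]; ring

open Fin.NatCast in
lemma card_image_le_finrank_span_pEdge_add_one :
    #(univ.image pl) ≤
      finrank (ZMod 2) (span (ZMod 2) (univ.image (pEdge pl) : Set (ℕ →₀ ZMod 2))) + 1 := by
  refine card_le_finrank_add_one (c := pl 0) _ fun a ha ↦ ?_
  obtain ⟨s, -, rfl⟩ := mem_image.1 ha
  have hwalk :
      span (ZMod 2) (Set.range fun k : ℕ ↦ edgeVec (pl (k : Fin l)) (pl ((k + 1 : ℕ) : Fin l))) ≤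
      span (ZMod 2) (univ.image (pEdge pl) : Set (ℕ →₀ ZMod 2)) := by
    refine span_mono ?_
    rintro _ ⟨k, rfl⟩
    exact mem_image.2 ⟨k, mem_univ _, by simp [pEdge]⟩
  simpa using hwalk (edgeVec_mem_span_walk (fun k : ℕ ↦ pl (k : Fin l)) s)

omit [NeZero l] in
lemma biUnion_nVerticesWith (hd : ∀ s, (nl s).Nonempty) :
    (univ.biUnion nl).biUnion (nVerticesWith nl) = univ :=
  eq_univ_of_forall fun s ↦ by
    obtain ⟨j, hj⟩ := hd s
    exact mem_biUnion.2 ⟨j, mem_biUnion.2 ⟨s, mem_univ s, hj⟩, mem_filter.2 ⟨mem_univ s, hj⟩⟩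

lemma two_mul_finrank_span_pEdge_add_le (hne : ∀ s, pl s ≠ pl (s + 1))
    (hd : ∀ s, (nl s).Nonempty) (hE : ∀ i j, Even (edgeCount pl nl i j)) :
    2 * finrank (ZMod 2) (span (ZMod 2) (univ.image (pEdge pl) : Set (ℕ →₀ ZMod 2))) +
      2 * #(univ.biUnion nl) ≤ l + ∑ j ∈ univ.biUnion nl, #(adjPLabels pl nl j) := by
  have hmem : ∀ j ∈ univ.biUnion nl, ∃ s, j ∈ nl s := fun j hj ↦ by
    obtain ⟨s, -, hs⟩ := mem_biUnion.1 hj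
    exact ⟨s, hs⟩
  have := two_mul_finrank_span_image_biUnion_add_le (pEdge pl) (nVerticesWith nl)
    (fun j ↦ #(adjPLabels pl nl j)) (univ.biUnion nl)
    (fun j _ ↦ sum_pEdge_eq_zero pl nl (hE · j))
    (fun j hj ↦ (hmem j hj).elim fun _ hs ↦ finrank_span_pEdge_lt pl nl hs)
    (fun j hj ↦ (hmem j hj).elim fun _ hs ↦ two_le_card_adjPLabels pl nl hne hs)
  rwa [biUnion_nVerticesWith nl hd, card_univ, Fintype.card_fin] at this

theorem sum_large_edgeCount_add_le_of_isMultiLabeling {D : ℕ} (h : IsMultiLabeling l D pl nl) :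
    ∑ i ∈ univ.image pl, ∑ j ∈ univ.biUnion nl,
        (if 2 < edgeCount pl nl i j then edgeCount pl nl i j else 0) +
      12 * distinctLabels pl nl ≤ 6 * l + 6 * ∑ s, #(nl s) + 12 := by
  obtain ⟨hne, hcard, hE⟩ := h
  have hd : ∀ s, (nl s).Nonempty := fun s ↦ card_pos.1 (hcard s).1
  have hlarge := sum_le_sum fun j (_ : j ∈ univ.biUnion nl) ↦
    sum_large_edgeCount_add_le pl nl (hE · j)
  have hrank := two_mul_finrank_span_pEdge_add_le pl nl hne hd hE
  have hconn := card_image_le_finrank_span_pEdge_add_one pl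
  rw [sum_add_distrib, ← mul_sum, ← mul_sum, sum_nLabelCount] at hlarge
  rw [sum_comm, distinctLabels]
  omega

end MultiLabeling

theorem stmt15_general (l D : ℕ) [NeZero l]
    (pl : Fin l → ℕ) (nl : Fin l → Finset ℕ)
    (h : IsMultiLabeling l D pl nl) :
    ∑ i ∈ Finset.univ.image pl, ∑ j ∈ Finset.univ.biUnion nl,
        (if 2 < edgeCount pl nl i j then (edgeCount pl nl i j : ℝ) else 0) ≤
      12 * excess pl nl := by
  have key := sum_large_edgeCount_add_le_of_isMultiLabeling pl nl h
  have hreal : (∑ i ∈ univ.image pl, ∑ j ∈ univ.biUnion nl,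
      (if 2 < edgeCount pl nl i j then (edgeCount pl nl i j : ℝ) else 0)) +
        12 * (distinctLabels pl nl : ℝ) ≤ 6 * l + 6 * ∑ s, ((nl s).card : ℝ) + 12 := by
    exact_mod_cast key
  rw [excess]
  linarith

theorem stmt15 (l D : ℕ) [NeZero l] (hl : 2 ≤ l)
    (pl : Fin l → ℕ) (nl : Fin l → Finset ℕ)
    (h : IsMultiLabeling l D pl nl) :
    ∑ i ∈ Finset.univ.image pl, ∑ j ∈ Finset.univ.biUnion nl,
        (if 2 < edgeCount pl nl i j then (edgeCount pl nl i j : ℝ) else 0) ≤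
      12 * excess pl nl :=
  stmt15_general l D pl nl h
end

section
/- Suppose a multi-labeling of an l-graph has at most l/2 distinct p-labels and excess Δ. Then Σ_{j : N_j ≥ 3} N_j ≤ 6Δ − 6, where N_j is the number of appearances of j as an n-label. Consequently the number of n-vertices carrying some label j with N_j ≥ 3 is at most 6Δ − 6. -/
open Finset

/-!
Every label `j` that occurs on the `n`-vertices occurs at least twice: if `j` sat on a single
`n`-vertex `s`, the edge count `b_{pl s, j}` would be `1`, as the two `p`-neighbours of `s` carry
different labels. Double counting gives `Σ_s d_s = Σ_j N_j`, so, with `m = P + #B` (`P` the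
number of `p`-labels, `B` the set of `n`-labels) and `2P ≤ l`,
`6Δ - 6 = 3l + 3 Σ_j N_j - 6P - 6 #B ≥ Σ_{j ∈ B} (3 N_j - 6)`,
and `3 N_j - 6` is `0` when `N_j = 2` and at least `N_j` when `N_j ≥ 3`.
An `n`-vertex carrying a label `j` with `N_j ≥ 3` is one of the `N_j` occurrences of `j`, which
gives the second bound.
-/

theorem sum_ite_three_le_add_six_mul_card {α : Type*} (B : Finset α) (N : α → ℕ)
    (hN : ∀ j ∈ B, 2 ≤ N j) :
    (∑ j ∈ B, if 3 ≤ N j then N j else 0) + 6 * B.card ≤ 3 * ∑ j ∈ B, N j := by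
  rw [mul_sum, mul_comm, ← smul_eq_mul, ← sum_const, ← sum_add_distrib]
  refine sum_le_sum fun j hj => ?_
  have := hN j hj
  split_ifs <;> omega

section

variable {l : ℕ} (pl : Fin l → ℕ) (nl : Fin l → Finset ℕ)

theorem edgeCount_eq_sum_filter [NeZero l] (i j : ℕ) :
    edgeCount pl nl i j = ∑ s ∈ univ.filter (fun s => j ∈ nl s),
      ((if pl s = i then 1 else 0) + (if pl (s + 1) = i then 1 else 0)) := by
  rw [edgeCount, sum_filter]
  refine sum_congr rfl fun s _ => ?_
  by_cases hj : j ∈ nl s <;> simp [hj]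

theorem two_le_nLabelCount [NeZero l] (hadj : ∀ s : Fin l, pl s ≠ pl (s + 1))
    (heven : ∀ i j : ℕ, Even (edgeCount pl nl i j)) {j : ℕ} (hj : j ∈ univ.biUnion nl) :
    2 ≤ nLabelCount nl j := by
  obtain ⟨s, -, hjs⟩ := mem_biUnion.mp hj
  have hpos : 0 < nLabelCount nl j := card_pos.mpr ⟨s, by simpa using hjs⟩
  by_contra! hlt
  obtain ⟨t, ht⟩ := card_eq_one.mp (show nLabelCount nl j = 1 by omega)
  have hedge : edgeCount pl nl (pl t) j = 1 := by
    simp [edgeCount_eq_sum_filter, ht, (hadj t).symm]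
  simpa [hedge] using heven (pl t) j

theorem sum_card_eq_sum_nLabelCount :
    ∑ s, (nl s).card = ∑ j ∈ univ.biUnion nl, nLabelCount nl j := by
  have habove : ∀ s, (univ.biUnion nl).bipartiteAbove (fun s j => j ∈ nl s) s = nl s := fun s =>
    filter_mem_eq_inter.trans (inter_eq_right.mpr (subset_biUnion_of_mem nl (mem_univ s)))
  rw [← sum_congr rfl fun s _ => congrArg card (habove s)]
  exact sum_card_bipartiteAbove_eq_sum_card_bipartiteBelow _

theorem card_filter_exists_le_sum_nLabelCount (P : ℕ → Prop) [DecidablePred P] :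
    (univ.filter fun s => ∃ j ∈ nl s, P j).card ≤
      ∑ j ∈ univ.biUnion nl, if P j then nLabelCount nl j else 0 := by
  rw [← sum_filter]
  refine (card_le_card fun s hs => ?_).trans card_biUnion_le
  obtain ⟨j, hjs, hPj⟩ := (mem_filter.mp hs).2
  exact mem_biUnion.mpr ⟨j, mem_filter.mpr ⟨mem_biUnion.mpr ⟨s, mem_univ s, hjs⟩, hPj⟩,
    mem_filter.mpr ⟨mem_univ s, hjs⟩⟩

end

theorem stmt17_general (l D : ℕ) [NeZero l]
    (pl : Fin l → ℕ) (nl : Fin l → Finset ℕ)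
    (h : IsMultiLabeling l D pl nl)
    (hfew : 2 * (Finset.univ.image pl).card ≤ l) :
    (∑ j ∈ Finset.univ.biUnion nl,
        (if 3 ≤ nLabelCount nl j then (nLabelCount nl j : ℝ) else 0)) ≤
      6 * excess pl nl - 6 ∧
    (((Finset.univ.filter fun s : Fin l =>
        ∃ j ∈ nl s, 3 ≤ nLabelCount nl j).card : ℕ) : ℝ) ≤
      6 * excess pl nl - 6 := by
  obtain ⟨hadj, -, heven⟩ := h
  have hcount := sum_ite_three_le_add_six_mul_card (univ.biUnion nl) (nLabelCount nl)
    fun j hj => two_le_nLabelCount pl nl hadj heven hj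
  rw [← sum_card_eq_sum_nLabelCount] at hcount
  have hbound : ((∑ j ∈ univ.biUnion nl,
      if 3 ≤ nLabelCount nl j then nLabelCount nl j else 0 : ℕ) : ℝ) ≤ 6 * excess pl nl - 6 := by
    have hcount' : _ ≤ (_ : ℝ) := Nat.cast_le.mpr hcount
    have hfew' : _ ≤ (_ : ℝ) := Nat.cast_le.mpr hfew
    rw [excess, distinctLabels]
    push_cast at hcount' hfew' ⊢
    linarith
  have hvert := card_filter_exists_le_sum_nLabelCount nl (fun j => 3 ≤ nLabelCount nl j)
  push_cast at hbound
  exact ⟨hbound, le_trans (by exact_mod_cast hvert) hbound⟩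

theorem stmt17 (l D : ℕ) [NeZero l] (hl : 2 ≤ l)
    (pl : Fin l → ℕ) (nl : Fin l → Finset ℕ)
    (h : IsMultiLabeling l D pl nl)
    (hfew : 2 * (Finset.univ.image pl).card ≤ l) :
    (∑ j ∈ Finset.univ.biUnion nl,
        (if 3 ≤ nLabelCount nl j then (nLabelCount nl j : ℝ) else 0)) ≤
      6 * excess pl nl - 6 ∧
    (((Finset.univ.filter fun s : Fin l =>
        ∃ j ∈ nl s, 3 ≤ nLabelCount nl j).card : ℕ) : ℝ) ≤
      6 * excess pl nl - 6 :=
  stmt17_general l D pl nl h hfew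
end
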